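/- Let p be a real number, and define the sequence G_n(p,t) for real t by G_0(p,t) = 1 and G_n(p,t) = (p/n) Σ_{k=1}^{n} (−1)^{k+1} B_k(t) G_{n−k}(p,t) for n ≥ 1. Then for every n ≥ 0, G_{2n+1}(p, 1/2) = 0. -/

import Mathlib

open Finset

/-- The `k`-th Bernoulli polynomial evaluated at a real number `t`
(generating function `u e^{tu}/(e^u - 1)`, so `B 1 t = t - 1/2`). -/
noncomputable def bern (k : ℕ) (t : ℝ) : ℝ :=
  Polynomial.aeval t (Polynomial.bernoulli k)

theorem Polynomial.bernoulli_eval_half_of_odd {n : ℕ} (hn : Odd n) :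
    (Polynomial.bernoulli n).eval (1 / 2 : ℚ) = 0 := by
  -- `1/2` is the fixed point of the symmetry `B_n(1 - x) = (-1)^n B_n(x)`.
  have h := Polynomial.bernoulli_eval_one_sub n (1 / 2)
  rw [hn.neg_one_pow] at h
  norm_num at h
  linarith

theorem bern_half_of_odd {k : ℕ} (hk : Odd k) : bern k (1 / 2) = 0 := by
  have h_half : (1 / 2 : ℝ) = algebraMap ℚ ℝ (1 / 2) := by norm_num
  rw [bern, h_half, Polynomial.aeval_algebraMap_apply_eq_algebraMap_eval,
    Polynomial.bernoulli_eval_half_of_odd hk, map_zero]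

/-- For odd `n`, the terms with odd `k` vanish with `w k`, and those with even `k` involve
`a (n - k)` at the smaller odd index `n - k`. -/
theorem eq_zero_of_odd_of_recursion {R : Type*} [NonUnitalNonAssocSemiring R] {a w c : ℕ → R}
    (hw : ∀ k, Odd k → w k = 0)
    (ha : ∀ n, 1 ≤ n → a n = c n * ∑ k ∈ Icc 1 n, w k * a (n - k)) :
    ∀ n, Odd n → a n = 0 := by
  intro n
  induction n using Nat.strong_induction_on with
  | _ n ih =>
    intro hn
    rw [ha n hn.pos, sum_eq_zero, mul_zero]
    intro k hk
    obtain ⟨hk1, hkn⟩ := mem_Icc.mp hk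
    rcases Nat.even_or_odd k with hk_even | hk_odd
    · rw [ih (n - k) (by omega) (Nat.Odd.sub_even hkn hn hk_even), mul_zero]
    · rw [hw k hk_odd, zero_mul]

theorem G_odd_eq_zero_at_half
    (p : ℝ) (G : ℝ → ℕ → ℝ)
    (hG : ∀ (t : ℝ) (n : ℕ), 1 ≤ n →
      G t n = (p / (n : ℝ)) *
        ∑ k ∈ Finset.Icc 1 n, (-1 : ℝ) ^ (k + 1) * bern k t * G t (n - k)) :
    ∀ n : ℕ, G (1 / 2) (2 * n + 1) = 0 := by
  intro n
  refine eq_zero_of_odd_of_recursion (c := fun n => p / n) (fun k hk => ?_) (hG (1 / 2))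
    _ (odd_two_mul_add_one n)
  rw [bern_half_of_odd hk, mul_zero]
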